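/- A coordinate transformation with Jacobian J(x) satisfies both the equidistribution condition det(J)⁻¹·det(M)^{1/2} = σ/|Ω_c| and the alignment condition (1/d)·tr(J M⁻¹ Jᵀ) = det(J M⁻¹ Jᵀ)^{1/d} at a point x if and only if J(x) M(x)⁻¹ J(x)ᵀ = θ(x)·I with θ(x) = (|Ω_c|/σ)^{2/d}, equivalently M(x) = (σ/|Ω_c|)^{2/d} · J(x)ᵀ J(x). -/

import Mathlib

open Matrix

lemma pow_nat_rpow_inv {x : ℝ} (hx : 0 ≤ x) {d : ℕ} (hd : (d : ℝ) ≠ 0) :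
    ((x ^ d : ℝ)) ^ ((1 : ℝ) / d) = x := by
  rw [← Real.rpow_natCast x d, ← Real.rpow_mul hx, mul_one_div, div_self hd, Real.rpow_one]

lemma half_rpow {a b : ℝ} (ha : 0 ≤ a) (hb : 0 ≤ b) (d : ℕ) :
    ((a ^ d * b ^ 2 : ℝ)) ^ ((1 : ℝ) / 2) = a ^ ((d : ℝ) / 2) * b := by
  rw [← Real.rpow_natCast a d, ← Real.rpow_natCast b 2,
    Real.mul_rpow (Real.rpow_nonneg ha _) (Real.rpow_nonneg hb _),
    ← Real.rpow_mul ha, ← Real.rpow_mul hb]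
  norm_num
  left; rw [mul_one_div]

lemma rpow_cancel {x : ℝ} (hx : 0 ≤ x) {d : ℕ} (hd : (d : ℝ) ≠ 0) :
    (x ^ ((d : ℝ) / 2)) ^ ((2 : ℝ) / d) = x := by
  rw [← Real.rpow_mul hx]
  rw [show (d : ℝ) / 2 * (2 / d) = 1 by field_simp, Real.rpow_one]

lemma rpow_cancel' {x : ℝ} (hx : 0 ≤ x) {d : ℕ} (hd : (d : ℝ) ≠ 0) :
    (x ^ ((2 : ℝ) / d)) ^ ((d : ℝ) / 2) = x := by
  rw [← Real.rpow_mul hx]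
  rw [show (2 : ℝ) / d * (d / 2) = 1 by field_simp, Real.rpow_one]

lemma posDef_mul_mul_transpose {n : Type*} [Fintype n] [DecidableEq n]
    {N : Matrix n n ℝ} (hN : N.PosDef) {J : Matrix n n ℝ} (hJ : IsUnit J.det) :
    (J * N * Jᵀ).PosDef := by
  refine Matrix.posDef_iff_dotProduct_mulVec.mpr ⟨?_, ?_⟩
  · have h := Matrix.isHermitian_conjTranspose_mul_mul Jᵀ hN.1
    simpa [Matrix.conjTranspose_eq_transpose_of_trivial] using h
  · intro x hx
    have hinj : Function.Injective (Jᵀ.mulVec) :=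
      Matrix.mulVec_injective_iff_isUnit.mpr
        (by simpa [Matrix.isUnit_iff_isUnit_det, Matrix.det_transpose] using hJ)
    have hx' : Jᵀ *ᵥ x ≠ 0 := fun h => hx (hinj (by simp [h]))
    have hNt : Nᵀ = N := by
      have := hN.1
      exact (show N.IsSymm by simpa [Matrix.conjTranspose_eq_transpose_of_trivial] using this)
    have := hN.dotProduct_mulVec_pos hx'
    simpa only [star_mulVec, dotProduct_mulVec, vecMul_vecMul,
      conjTranspose_eq_transpose_of_trivial, ← Matrix.mulVec_transpose,
      Matrix.transpose_transpose, Matrix.transpose_mul, Matrix.mul_assoc, hNt,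
      ← Matrix.mulVec_mulVec] using this

lemma posDef_align_scalar {d : ℕ} (hd : 0 < d) {A : Matrix (Fin d) (Fin d) ℝ} (hA : A.PosDef)
    (hal : (1 / (d : ℝ)) * A.trace = A.det ^ ((1 : ℝ) / d)) :
    ∃ c : ℝ, 0 < c ∧ A = c • (1 : Matrix (Fin d) (Fin d) ℝ) := by
  have hH := hA.isHermitian
  set lam := hH.eigenvalues with hlam
  have hpos : ∀ i, 0 < lam i := hA.eigenvalues_pos
  have hdet : A.det = ∏ i, lam i := by
    simpa using hH.det_eq_prod_eigenvalues
  have hUU : (hH.eigenvectorUnitary : Matrix (Fin d) (Fin d) ℝ) *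
      star (hH.eigenvectorUnitary : Matrix (Fin d) (Fin d) ℝ) = 1 :=
    (Matrix.mem_unitaryGroup_iff).mp (hH.eigenvectorUnitary).2
  have hUU' : star (hH.eigenvectorUnitary : Matrix (Fin d) (Fin d) ℝ) *
      (hH.eigenvectorUnitary : Matrix (Fin d) (Fin d) ℝ) = 1 :=
    (Matrix.mem_unitaryGroup_iff').mp (hH.eigenvectorUnitary).2
  have htr : A.trace = ∑ i, lam i := by
    conv_lhs => rw [hH.spectral_theorem, Unitary.conjStarAlgAut_apply]
    rw [Matrix.trace_mul_cycle, hUU', Matrix.one_mul, Matrix.trace_diagonal]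
    simp [hlam]
  set w : Fin d → ℝ := fun _ => 1 / (d : ℝ) with hw
  have hdne : (d : ℝ) ≠ 0 := Nat.cast_ne_zero.mpr hd.ne'
  have hw0 : ∀ i ∈ Finset.univ, 0 < w i := fun i _ => by
    simp only [hw]; positivity
  have hw1 : ∑ i : Fin d, w i = 1 := by
    simp [hw]; field_simp
  have hmem : ∀ i ∈ Finset.univ, lam i ∈ Set.Ioi (0 : ℝ) := fun i _ => hpos i
  have key : Real.log (∑ i, w i • lam i) = ∑ i, w i • Real.log (lam i) := by
    have h1 : ∑ i, w i • lam i = (1 / (d : ℝ)) * A.trace := by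
      rw [htr, Finset.mul_sum]; simp [hw, smul_eq_mul]
    rw [h1, hal, Real.log_rpow hA.det_pos, hdet,
      Real.log_prod (fun i _ => (hpos i).ne')]
    rw [Finset.mul_sum]; simp [hw, smul_eq_mul]
  have hall := (strictConcaveOn_log_Ioi.map_sum_eq_iff hw0 hw1 hmem).mp key
  set c := ∑ i, w i • lam i with hc
  have hceq : ∀ j, lam j = c := fun j => hall j (Finset.mem_univ j)
  refine ⟨c, by rw [← hceq ⟨0, hd⟩]; exact hpos _, ?_⟩
  have hdg : Matrix.diagonal (RCLike.ofReal ∘ lam) = c • (1 : Matrix (Fin d) (Fin d) ℝ) := by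
    have : (RCLike.ofReal ∘ lam : Fin d → ℝ) = fun _ => c := funext fun i => by
      simp [hceq i]
    rw [this, Matrix.smul_one_eq_diagonal]
  conv_lhs => rw [hH.spectral_theorem, Unitary.conjStarAlgAut_apply]
  rw [hdg, Matrix.mul_smul, Matrix.smul_mul, Matrix.mul_one, hUU]

theorem equidistribution_and_alignment_iff (d : ℕ) (hd : 0 < d)
    (J M : Matrix (Fin d) (Fin d) ℝ) (hJ : 0 < J.det) (hM : M.PosDef)
    (σ Ωc : ℝ) (hσ : 0 < σ) (hΩc : 0 < Ωc) :
    ((Matrix.det J)⁻¹ * (Matrix.det M) ^ ((1 : ℝ) / 2) = σ / Ωc ∧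
        (1 / (d : ℝ)) * Matrix.trace (J * M⁻¹ * Jᵀ) =
          (Matrix.det (J * M⁻¹ * Jᵀ)) ^ ((1 : ℝ) / d)) ↔
      M = ((σ / Ωc) ^ ((2 : ℝ) / d)) • (Jᵀ * J) := by
  have hdne : (d : ℝ) ≠ 0 := Nat.cast_ne_zero.mpr hd.ne'
  have hJu : IsUnit J.det := hJ.ne'.isUnit
  have hJtu : IsUnit Jᵀ.det := by rwa [Matrix.det_transpose]
  have hJJdet : (Jᵀ * J).det = J.det ^ 2 := by
    rw [Matrix.det_mul, Matrix.det_transpose, sq]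
  have hJJu : IsUnit (Jᵀ * J).det := by
    rw [hJJdet]; exact (pow_pos hJ 2).ne'.isUnit
  have hσΩ : 0 < σ / Ωc := div_pos hσ hΩc
  constructor
  · rintro ⟨heq, hal⟩
    have hA : (J * M⁻¹ * Jᵀ).PosDef := posDef_mul_mul_transpose hM.inv hJu
    obtain ⟨c, hc, hA1⟩ := posDef_align_scalar hd hA hal
    haveI : Invertible c := invertibleOfNonzero hc.ne'
    have hMinv : M⁻¹ = c • (J⁻¹ * (Jᵀ)⁻¹) := by
      calc M⁻¹ = (J⁻¹ * J) * M⁻¹ * (Jᵀ * (Jᵀ)⁻¹) := by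
            rw [Matrix.nonsing_inv_mul _ hJu, Matrix.mul_nonsing_inv _ hJtu,
              Matrix.one_mul, Matrix.mul_one]
        _ = J⁻¹ * (J * M⁻¹ * Jᵀ) * (Jᵀ)⁻¹ := by
            simp only [Matrix.mul_assoc]
        _ = J⁻¹ * (c • (1 : Matrix (Fin d) (Fin d) ℝ)) * (Jᵀ)⁻¹ := by rw [hA1]
        _ = c • (J⁻¹ * (Jᵀ)⁻¹) := by
            rw [Matrix.mul_smul, Matrix.smul_mul, Matrix.mul_one]
    have hMeq : M = c⁻¹ • (Jᵀ * J) := by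
      have hMdu : IsUnit M.det := hM.det_pos.ne'.isUnit
      have h1 : (c • (J⁻¹ * (Jᵀ)⁻¹)) * (c⁻¹ • (Jᵀ * J)) = 1 := by
        rw [Matrix.smul_mul, Matrix.mul_smul, smul_smul, mul_inv_cancel₀ hc.ne',
          show J⁻¹ * (Jᵀ)⁻¹ * (Jᵀ * J) = J⁻¹ * ((Jᵀ)⁻¹ * Jᵀ) * J by
            simp only [Matrix.mul_assoc],
          Matrix.nonsing_inv_mul _ hJtu, Matrix.mul_one, Matrix.nonsing_inv_mul _ hJu,
          one_smul]
      rw [← Matrix.nonsing_inv_nonsing_inv M hMdu, hMinv,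
        Matrix.inv_eq_right_inv h1]
    have hdetM : M.det = (c⁻¹) ^ d * J.det ^ 2 := by
      rw [hMeq, Matrix.det_smul, hJJdet, Fintype.card_fin]
    have hkey : (c⁻¹) ^ ((d : ℝ) / 2) = σ / Ωc := by
      rw [hdetM, half_rpow (inv_pos.mpr hc).le hJ.le] at heq
      field_simp at heq ⊢
      linarith [heq]
    rw [hMeq, ← hkey, rpow_cancel (inv_pos.mpr hc).le hdne]
  · intro h
    subst h
    have hk : 0 < (σ / Ωc) ^ ((2 : ℝ) / d) := Real.rpow_pos_of_pos hσΩ _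
    set k : ℝ := (σ / Ωc) ^ ((2 : ℝ) / d) with hkdef
    haveI : Invertible k := invertibleOfNonzero hk.ne'
    have hMinv : (k • (Jᵀ * J))⁻¹ = k⁻¹ • (J⁻¹ * (Jᵀ)⁻¹) := by
      apply Matrix.inv_eq_right_inv
      rw [Matrix.smul_mul, Matrix.mul_smul, smul_smul, mul_inv_cancel₀ hk.ne',
        show Jᵀ * J * (J⁻¹ * Jᵀ⁻¹) = Jᵀ * (J * J⁻¹) * Jᵀ⁻¹ by
          simp only [Matrix.mul_assoc],
        Matrix.mul_nonsing_inv _ hJu, Matrix.mul_one, Matrix.mul_nonsing_inv _ hJtu,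
        one_smul]
    have hA : J * (k • (Jᵀ * J))⁻¹ * Jᵀ = k⁻¹ • (1 : Matrix (Fin d) (Fin d) ℝ) := by
      rw [hMinv, Matrix.mul_smul, Matrix.smul_mul]
      congr 1
      rw [← Matrix.mul_assoc, Matrix.mul_nonsing_inv _ hJu, Matrix.one_mul,
        Matrix.nonsing_inv_mul _ hJtu]
    constructor
    · rw [Matrix.det_smul, hJJdet, Fintype.card_fin,
        half_rpow hk.le hJ.le]
      rw [hkdef, rpow_cancel' hσΩ.le hdne]
      field_simp
    · rw [hA, Matrix.trace_smul, Matrix.trace_one, Matrix.det_smul, Matrix.det_one,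
        Fintype.card_fin, mul_one, pow_nat_rpow_inv (inv_pos.mpr hk).le hdne]
      simp [smul_eq_mul]
      field_simp
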